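/- Every rational-valued character of a finite group G is a ℤ-linear combination of the characteristic functions Φ₁, …, Φ_m of the equivalence classes of the relation x ≡ y iff ⟨x⟩ is conjugate to ⟨y⟩ in G. -/

import Mathlib

/-- The induced character `(1_C)^G` of the trivial character of a subgroup `C`. -/
noncomputable def indTriv (G : Type) [Group G] [Fintype G] (C : Subgroup G) : G → ℂ :=
  fun g => (Nat.card {x : G // x⁻¹ * g * x ∈ C} : ℂ) / (Nat.card C : ℂ)

/-- `χ : G → ℂ` is a character: the trace of a nonzero finite-dimensional complex rep. -/
def IsCharacter (G : Type) [Group G] (χ : G → ℂ) : Prop :=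
  ∃ V : FDRep ℂ G, χ = V.character ∧ χ ≠ 0

/-- `χ` is an irreducible character of `G`. -/
def IsIrredChar (G : Type) [Group G] (χ : G → ℂ) : Prop :=
  ∃ V : FDRep ℂ G, CategoryTheory.Simple V ∧ χ = V.character

/-- All values of `χ` are rational. -/
def IsRatValued {G : Type} (χ : G → ℂ) : Prop := ∀ g : G, ∃ q : ℚ, χ g = (q : ℂ)

/-- Subgroups `H` and `K` are conjugate in `G`. -/
def SubConj {G : Type} [Group G] (H K : Subgroup G) : Prop :=
  ∃ g : G, Subgroup.map (MulAut.conj g).toMonoidHom H = K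

/-- The ℂ-subspace of `G → ℂ` spanned by the rational valued characters of `G`. -/
noncomputable def ratCharSpan (G : Type) [Group G] : Submodule ℂ (G → ℂ) :=
  Submodule.span ℂ {χ : G → ℂ | IsCharacter G χ ∧ IsRatValued χ}

/-- The number of conjugacy classes of cyclic subgroups of `G`. -/
noncomputable def numCyclicClasses (G : Type) [Group G] : ℕ :=
  Nat.card (Quot (fun H K : {H : Subgroup G // IsCyclic ↥H} => SubConj H.1 K.1))

/-- Indicator function of the set of `g` with `⟨g⟩` conjugate to `⟨x⟩`. -/
noncomputable def Phi (G : Type) [Group G] (x : G) : G → ℂ := fun g =>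
  letI := Classical.propDecidable
  if SubConj (Subgroup.zpowers g) (Subgroup.zpowers x) then 1 else 0

/-- The cyclotomic field `ℚ(e^{2πi/n})` as a subfield of `ℂ`. -/
noncomputable def cycField (n : ℕ) : IntermediateField ℚ ℂ :=
  IntermediateField.adjoin ℚ ({Complex.exp (2 * Real.pi * Complex.I / n)} : Set ℂ)

/-- `ψ` is in the `Gal(ℚ(ζ_n)/ℚ)`-orbit of `χ` (acting on character values). -/
def galRel (G : Type) [Group G] (n : ℕ) (χ ψ : G → ℂ) : Prop :=
  ∃ σ : cycField n ≃ₐ[ℚ] cycField n,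
    ∀ g : G, ∃ h : χ g ∈ cycField n, (σ ⟨χ g, h⟩ : ℂ) = ψ g

/-- The field `ℚ(χ)` generated by the values of `χ`. -/
noncomputable def charField (G : Type) (χ : G → ℂ) : IntermediateField ℚ ℂ :=
  IntermediateField.adjoin ℚ (Set.range χ)

/-- The rationalization `χ^rat = ∑_{σ ∈ Gal(ℚ(χ)/ℚ)} χ^σ`. -/
noncomputable def ratzn (G : Type) [Group G] (χ : G → ℂ) : G → ℂ :=
  fun g => ∑ᶠ σ : charField G χ ≃ₐ[ℚ] charField G χ,
    (σ ⟨χ g, IntermediateField.subset_adjoin ℚ _ ⟨g, rfl⟩⟩ : ℂ)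

/-- The induced character of a character `φ` of a subgroup `H`. -/
noncomputable def inducedChar (G : Type) [Group G] [Fintype G] (H : Subgroup G)
    (φ : H → ℂ) : G → ℂ := fun g =>
  letI := Classical.propDecidable
  (Nat.card H : ℂ)⁻¹ * ∑ x : G, if h : x⁻¹ * g * x ∈ H then φ ⟨x⁻¹ * g * x, h⟩ else 0

/-!
The value `χ g` is the trace of `ρ g`, an endomorphism with `ρ g ^ n = 1` for `n = orderOf g`.
Splitting `1` into the eigenprojections `(1/n) ∑ᵢ (ζ⁻ʲ • ρ g)ⁱ`, for a primitive `n`-th root of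
unity `ζ`, gives one `P ∈ ℤ[X]` with `χ (g ^ k) = P (ζ ^ k)` for all `k`. If `χ g` is rational, it
is an algebraic integer, hence an integer; and for `k` coprime to `n` the root `ζ ^ k` has the same
minimal polynomial over `ℚ` as `ζ` (the `n`-th cyclotomic polynomial), so `χ (g ^ k) = χ g`.
Since `⟨x⟩` conjugate to `⟨y⟩` means `x` is conjugate to such a `y ^ k`, a rational character is an
integer-valued function constant on the classes of `≡`: the combination of the `Φᵢ` whose
coefficients are its values on a set of representatives.
-/

open Finset

theorem mul_geom_sum_eq_of_pow_eq_one {R : Type*} [Ring R] {x : R} {n : ℕ} (h : x ^ n = 1) :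
    x * ∑ i ∈ range n, x ^ i = ∑ i ∈ range n, x ^ i := by
  have := mul_geom_sum x n
  rwa [h, sub_self, sub_mul, one_mul, sub_eq_zero] at this

theorem geom_sum_eq_zero_of_pow_eq_one {R : Type*} [CommRing R] [IsDomain R] {x : R} {n : ℕ}
    (h : x ^ n = 1) (hx : x ≠ 1) : ∑ i ∈ range n, x ^ i = 0 := by
  have := mul_neg_geom_sum x n
  rwa [h, sub_self, mul_eq_zero, sub_eq_zero, or_iff_right (Ne.symm hx)] at this

theorem pow_mul_eq_smul_of_mul_eq_smul {K A : Type*} [CommSemiring K] [Semiring A] [Algebra K A]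
    {x y : A} {c : K} (h : x * y = c • y) (k : ℕ) : x ^ k * y = c ^ k • y := by
  induction k with
  | zero => simp
  | succ k ih => rw [pow_succ, mul_assoc, h, mul_smul_comm, ih, smul_smul, pow_succ']

section EigenProjection

variable {K A : Type*} [Field K] [Ring A] [Algebra K A] {ζ : K} {n : ℕ} {f : A}

noncomputable def eigenProjection (ζ : K) (n j : ℕ) (f : A) : A :=
  (n : K)⁻¹ • ∑ i ∈ range n, ((ζ ^ j)⁻¹ • f) ^ i

theorem twist_mul_eigenProjection (hζ : ζ ^ n = 1) (hf : f ^ n = 1) (j : ℕ) :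
    ((ζ ^ j)⁻¹ • f) * eigenProjection ζ n j f = eigenProjection ζ n j f := by
  have htwist : ((ζ ^ j)⁻¹ • f) ^ n = 1 := by
    rw [_root_.smul_pow, hf, inv_pow, ← pow_mul, mul_comm, pow_mul, hζ, one_pow, inv_one,
      one_smul]
  rw [eigenProjection, mul_smul_comm, mul_geom_sum_eq_of_pow_eq_one htwist]

theorem mul_eigenProjection [NeZero n] (hζ : IsPrimitiveRoot ζ n) (hf : f ^ n = 1) (j : ℕ) :
    f * eigenProjection ζ n j f = ζ ^ j • eigenProjection ζ n j f := by
  have hζj : ζ ^ j ≠ 0 := pow_ne_zero j (hζ.ne_zero (NeZero.ne n))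
  calc f * eigenProjection ζ n j f
      = ζ ^ j • (((ζ ^ j)⁻¹ • f) * eigenProjection ζ n j f) := by
        rw [smul_mul_assoc, smul_smul, mul_inv_cancel₀ hζj, one_smul]
    _ = ζ ^ j • eigenProjection ζ n j f := by
        rw [twist_mul_eigenProjection hζ.pow_eq_one hf]

theorem isIdempotentElem_eigenProjection [NeZero n] (hζ : IsPrimitiveRoot ζ n) (hf : f ^ n = 1)
    (j : ℕ) : IsIdempotentElem (eigenProjection ζ n j f) := by
  have hn : (n : K) ≠ 0 := (hζ.neZero').ne
  have hpow (i : ℕ) : ((ζ ^ j)⁻¹ • f) ^ i * eigenProjection ζ n j f = eigenProjection ζ n j f := by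
    simpa using pow_mul_eq_smul_of_mul_eq_smul (x := (ζ ^ j)⁻¹ • f) (c := (1 : K))
      (by rw [one_smul]; exact twist_mul_eigenProjection hζ.pow_eq_one hf j) i
  rw [IsIdempotentElem]
  nth_rw 1 [eigenProjection]
  rw [smul_mul_assoc, sum_mul, sum_congr rfl fun i _ => hpow i, sum_const, card_range,
    ← Nat.cast_smul_eq_nsmul K, smul_smul, inv_mul_cancel₀ hn, one_smul]

theorem sum_eigenProjection [NeZero n] (hζ : IsPrimitiveRoot ζ n) :
    ∑ j ∈ range n, eigenProjection ζ n j f = 1 := by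
  have hn : (n : K) ≠ 0 := (hζ.neZero').ne
  have horth (i : ℕ) (hi : i ∈ range n) :
      ∑ j ∈ range n, ((ζ ^ j)⁻¹ • f) ^ i = if i = 0 then (n : K) • f ^ i else 0 := by
    simp_rw [_root_.smul_pow, ← sum_smul, inv_pow, ← pow_mul, mul_comm _ i, pow_mul, ← inv_pow]
    split_ifs with h0
    · simp [h0]
    · rw [geom_sum_eq_zero_of_pow_eq_one, zero_smul]
      · rw [← pow_mul, mul_comm, pow_mul, inv_pow, hζ.pow_eq_one, inv_one, one_pow]
      · rw [inv_pow, inv_ne_one]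
        exact hζ.pow_ne_one_of_pos_of_lt h0 (mem_range.mp hi)
  simp only [eigenProjection, ← smul_sum]
  rw [sum_comm, sum_congr rfl horth, sum_ite_eq' (range n) 0, if_pos (mem_range.mpr (NeZero.pos n)),
    pow_zero, smul_smul, inv_mul_cancel₀ hn, one_smul]

end EigenProjection

theorem Module.End.trace_pow_eq_sum_eigenProjection {K V : Type*} [Field K] [AddCommGroup V]
    [Module K V] [FiniteDimensional K V] {f : Module.End K V} {n : ℕ} [NeZero n] {ζ : K}
    (hζ : IsPrimitiveRoot ζ n) (hf : f ^ n = 1) (k : ℕ) :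
    LinearMap.trace K V (f ^ k) = ∑ j ∈ range n,
      (Module.finrank K (LinearMap.range (eigenProjection ζ n j f)) : K) * (ζ ^ k) ^ j := by
  conv_lhs => rw [← mul_one (f ^ k), ← sum_eigenProjection (f := f) hζ, mul_sum, map_sum]
  refine sum_congr rfl fun j _ => ?_
  have hproj := (LinearMap.isProj_range_iff_isIdempotentElem _).mpr
    (isIdempotentElem_eigenProjection hζ hf j)
  rw [pow_mul_eq_smul_of_mul_eq_smul (mul_eigenProjection hζ hf j), map_smul, hproj.trace,
    smul_eq_mul, mul_comm, ← pow_mul, ← pow_mul, mul_comm j k]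

open Polynomial in
theorem FDRep.exists_character_pow_eq_aeval {G : Type*} [Group G] [Finite G] (V : FDRep ℂ G)
    {g : G} {ζ : ℂ} (hζ : IsPrimitiveRoot ζ (orderOf g)) :
    ∃ P : ℤ[X], ∀ k : ℕ, V.character (g ^ k) = aeval (ζ ^ k) P := by
  have : NeZero (orderOf g) := ⟨(orderOf_pos g).ne'⟩
  have hg : V.ρ g ^ orderOf g = 1 := by rw [← map_pow, pow_orderOf_eq_one, map_one]
  refine ⟨∑ j ∈ range (orderOf g),
    C (Module.finrank ℂ (LinearMap.range (eigenProjection ζ (orderOf g) j (V.ρ g))) : ℤ) * X ^ j,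
    fun k => ?_⟩
  rw [FDRep.character, map_pow, Module.End.trace_pow_eq_sum_eigenProjection hζ hg]
  simp

open Polynomial in
theorem IsPrimitiveRoot.aeval_pow_eq_of_coprime {K : Type*} [Field K] [CharZero K] {ζ : K}
    {n : ℕ} (hζ : IsPrimitiveRoot ζ n) (hn : 0 < n) {k : ℕ} (hk : k.Coprime n) {P : ℚ[X]} {q : ℚ}
    (h : aeval ζ P = q) : aeval (ζ ^ k) P = q := by
  have hmin : minpoly ℚ (ζ ^ k) = minpoly ℚ ζ := by
    rw [← cyclotomic_eq_minpoly_rat hζ hn, ← cyclotomic_eq_minpoly_rat (hζ.pow_of_coprime k hk) hn]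
  have hdvd : minpoly ℚ (ζ ^ k) ∣ P - C q := by
    rw [hmin]
    exact minpoly.dvd ℚ ζ (by simp [h])
  have := aeval_eq_zero_of_dvd_aeval_eq_zero hdvd (minpoly.aeval ℚ (ζ ^ k))
  simpa [sub_eq_zero] using this

theorem Rat.exists_int_eq_of_isIntegral {K : Type*} [Field K] [CharZero K] {q : ℚ}
    (h : IsIntegral ℤ (q : K)) : ∃ z : ℤ, q = z := by
  rw [← eq_ratCast (algebraMap ℚ K), isIntegral_algebraMap_iff (algebraMap ℚ K).injective,
    IsIntegrallyClosed.isIntegral_iff] at h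
  obtain ⟨z, hz⟩ := h
  exact ⟨z, by rw [← hz, eq_intCast]⟩

open Polynomial in
theorem FDRep.character_pow_eq_of_coprime {G : Type*} [Group G] [Finite G] (V : FDRep ℂ G)
    {g : G} {q : ℚ} (hq : V.character g = q) {k : ℕ} (hk : k.Coprime (orderOf g)) :
    V.character (g ^ k) = V.character g := by
  have hζ := Complex.isPrimitiveRoot_exp (orderOf g) (orderOf_pos g).ne'
  obtain ⟨P, hP⟩ := V.exists_character_pow_eq_aeval hζ
  have hPq : aeval (Complex.exp (2 * Real.pi * Complex.I / orderOf g)) (P.map (algebraMap ℤ ℚ))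
      = q := by
    rw [aeval_map_algebraMap, ← pow_one (Complex.exp _), ← hP 1, pow_one, hq]
  rw [hP k, ← aeval_map_algebraMap ℚ, hζ.aeval_pow_eq_of_coprime (orderOf_pos g) hk hPq, hq]

theorem FDRep.exists_character_eq_intCast {G : Type*} [Group G] [Finite G] (V : FDRep ℂ G)
    {g : G} {q : ℚ} (hq : V.character g = q) : ∃ z : ℤ, V.character g = z := by
  have hζ := Complex.isPrimitiveRoot_exp (orderOf g) (orderOf_pos g).ne'
  obtain ⟨P, hP⟩ := V.exists_character_pow_eq_aeval hζ
  have hint : IsIntegral ℤ (V.character g) := by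
    rw [← pow_one g, hP 1, pow_one]
    exact adjoin_le_integralClosure (hζ.isIntegral (orderOf_pos g))
      (Polynomial.aeval_mem_adjoin_singleton ℤ _)
  obtain ⟨z, rfl⟩ := Rat.exists_int_eq_of_isIntegral (hq ▸ hint)
  exact ⟨z, by rw [hq, Rat.cast_intCast]⟩

section SubConj

variable {G : Type} [Group G]

theorem subConj_refl (H : Subgroup G) : SubConj H H :=
  ⟨1, by ext; simp⟩

theorem map_conj_map_conj (a b : G) (H : Subgroup G) :
    (H.map (MulAut.conj b).toMonoidHom).map (MulAut.conj a).toMonoidHom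
      = H.map (MulAut.conj (a * b)).toMonoidHom := by
  rw [Subgroup.map_map, map_mul]
  rfl

theorem SubConj.symm {H K : Subgroup G} : SubConj H K → SubConj K H := by
  rintro ⟨g, rfl⟩
  exact ⟨g⁻¹, by rw [map_conj_map_conj, inv_mul_cancel, map_one]; ext; simp⟩

theorem SubConj.trans {H K L : Subgroup G} : SubConj H K → SubConj K L → SubConj H L := by
  rintro ⟨g, rfl⟩ ⟨g', rfl⟩
  exact ⟨g' * g, (map_conj_map_conj g' g H).symm⟩

end SubConj

theorem exists_conj_eq_pow_coprime_of_subConj {G : Type} [Group G] [Finite G] {x y : G}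
    (h : SubConj (Subgroup.zpowers x) (Subgroup.zpowers y)) :
    ∃ c : G, ∃ k : ℕ, c * x * c⁻¹ = y ^ k ∧ k.Coprime (orderOf y) := by
  obtain ⟨c, hc⟩ := h
  have hzp : Subgroup.zpowers (c * x * c⁻¹) = Subgroup.zpowers y := by
    rw [← hc, MonoidHom.map_zpowers]
    rfl
  obtain ⟨k, hk : y ^ k = c * x * c⁻¹⟩ :=
    mem_powers_iff_mem_zpowers.mpr (hzp ▸ Subgroup.mem_zpowers (c * x * c⁻¹))
  refine ⟨c, k, hk.symm, ?_⟩
  have hord : orderOf (y ^ k) = orderOf y := by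
    rw [← Nat.card_zpowers, hk, hzp, Nat.card_zpowers]
  rw [orderOf_pow] at hord
  exact Nat.Coprime.symm ((Nat.div_eq_self.mp hord).resolve_left (orderOf_pos y).ne')

theorem FDRep.character_eq_of_subConj {G : Type} [Group G] [Finite G] (V : FDRep ℂ G)
    (hV : IsRatValued V.character) {x y : G}
    (h : SubConj (Subgroup.zpowers x) (Subgroup.zpowers y)) : V.character x = V.character y := by
  obtain ⟨c, k, hk, hcop⟩ := exists_conj_eq_pow_coprime_of_subConj h
  obtain ⟨q, hq⟩ := hV y
  rw [← V.char_conj x c, hk, V.character_pow_eq_of_coprime hq hcop]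

def cyclicConjSetoid (G : Type) [Group G] : Setoid G where
  r x y := SubConj (Subgroup.zpowers x) (Subgroup.zpowers y)
  iseqv := ⟨fun _ => subConj_refl _, SubConj.symm, SubConj.trans⟩

open Classical in
theorem Setoid.sum_ite_out_mul_ite {α R : Type*} [Fintype α] [Semiring R] (s : Setoid α)
    {f : α → R} (hf : ∀ a b, s a b → f a = f b) (a : α) :
    ∑ x, (if (Quotient.mk s x).out = x then f x else 0) * (if s a x then 1 else 0) = f a := by
  have hout : s (Quotient.mk s a).out a := Quotient.mk_out (s := s) a
  rw [sum_eq_single (Quotient.mk s a).out]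
  · rw [if_pos (by rw [Quotient.out_eq]), if_pos (s.symm hout), mul_one, hf _ _ hout]
  · intro x _ hx
    by_cases hax : s a x
    · rw [if_neg fun h => hx (by rw [← h, Quotient.sound hax])]
      simp
    · rw [if_neg hax, mul_zero]
  · simp

theorem stmt6 (G : Type) [Group G] [Fintype G] (χ : G → ℂ)
    (h1 : IsCharacter G χ) (h2 : IsRatValued χ) :
    ∃ a : G → ℤ, ∀ g : G, χ g = ∑ x : G, (a x : ℂ) * Phi G x g := by
  classical
  obtain ⟨V, rfl, -⟩ := h1
  choose z hz using fun g => V.exists_character_eq_intCast (h2 g).choose_spec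
  refine ⟨fun x => if (Quotient.mk (cyclicConjSetoid G) x).out = x then z x else 0, fun g => ?_⟩
  have hconst : ∀ x y, cyclicConjSetoid G x y → V.character x = V.character y :=
    fun x y h => V.character_eq_of_subConj h2 h
  rw [← Setoid.sum_ite_out_mul_ite _ hconst g]
  refine sum_congr rfl fun x _ => ?_
  simp only [Phi, ← hz, Int.cast_ite, Int.cast_zero]
  rfl
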